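/- Let ω > 0 and let S be uniformly distributed on [0,1]. Define Γ^sin(t; S, ω) = (πω/2) sin(πS) [R₄(t; S, ω) − R₄(t − π/ω; S, ω)]. Then for every t ∈ [0, 2π/ω], 𝔼_S[Γ^sin(t; S, ω)] = sin(ωt), and for every t ∉ [0, 2π/ω], 𝔼_S[Γ^sin(t; S, ω)] = 0. -/

import Mathlib

/-! Rescaling `t` by `ω` reduces everything to `ω = 1`. Averaged against `sin (π S) dS`, the two
`S`-dependent ramps `relu (v - π S)` and `relu (v - π (1 - S))` of `R4 1 S v` (equal on average, by
`S ↦ 1 - S`) become the convolution `∫₀^π sin x · relu (v - x) dx`, and since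
`∫₀^v sin x · (v - x) dx = v - sin v` this convolution is `relu v + relu (v - π)` minus the arch
`sin · 1_[0,π]`. Hence `(π ω / 2) 𝔼 R₄(t; S, ω)` is the arch `sin (ω t) · 1_[0,π] (ω t)`, and
`Γ^sin` is the difference of this arch and its translate by `π / ω`; as `sin (v - π) = - sin v`,
the two arches glue into one full period of the sine. -/

open Real
open scoped BigOperators

/-- `ReLU(t) = max(0, t)`. -/
noncomputable def relu (t : ℝ) : ℝ := max 0 t

/-- `R₄(t; S, ω) = ReLU(t) + ReLU(t - π/ω) - ReLU(t - πS/ω) - ReLU(t - π(1-S)/ω)`. -/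
noncomputable def R4 (ω S t : ℝ) : ℝ :=
  relu t + relu (t - π / ω) - relu (t - π * S / ω) - relu (t - π * (1 - S) / ω)

/-- `Γ^sin(t; S, ω) = (πω/2) sin(πS) [R₄(t; S, ω) - R₄(t - π/ω; S, ω)]`. -/
noncomputable def gammaSin (ω S t : ℝ) : ℝ :=
  π * ω / 2 * Real.sin (π * S) * (R4 ω S t - R4 ω S (t - π / ω))

/-- `Γ^cos_n(t; S, ω) = Σ_{i=-n-1}^{n} Γ^sin(t - 2πi/ω + π/(2ω); S, ω)`. -/
noncomputable def gammaCos (n : ℕ) (ω S t : ℝ) : ℝ :=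
  ∑ i ∈ Finset.Icc (-(n : ℤ) - 1) (n : ℤ),
    gammaSin ω S (t - 2 * π * (i : ℝ) / ω + π / (2 * ω))

@[fun_prop] lemma continuous_relu : Continuous relu := continuous_const.max continuous_id

lemma relu_of_nonpos {x : ℝ} (hx : x ≤ 0) : relu x = 0 := max_eq_left hx

lemma relu_of_nonneg {x : ℝ} (hx : 0 ≤ x) : relu x = x := max_eq_right hx

lemma relu_mul_of_nonneg {c : ℝ} (hc : 0 ≤ c) (x : ℝ) : relu (c * x) = c * relu x := by
  simp only [relu, mul_max_of_nonneg _ _ hc, mul_zero]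

lemma integral_sin_mul_sub (v a b : ℝ) :
    ∫ x in a..b, sin x * (v - x) = (sin a - cos b * (v - b)) - (sin b - cos a * (v - a)) := by
  have hderiv (x : ℝ) :
      HasDerivAt (fun x => -cos x * (v - x) - sin x) (sin x * (v - x)) x := by
    refine (((hasDerivAt_cos x).neg.mul ((hasDerivAt_id' x).const_sub v)).sub
      (hasDerivAt_sin x)).congr_deriv ?_
    rw [Pi.neg_apply]
    ring
  rw [intervalIntegral.integral_eq_sub_of_hasDerivAt (fun x _ => hderiv x)
    ((by fun_prop : Continuous fun x => sin x * (v - x)).intervalIntegrable a b)]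
  ring

lemma integral_sin_mul_relu_sub (v : ℝ) :
    ∫ x in (0 : ℝ)..π, sin x * relu (v - x) =
      relu v + relu (v - π) - (Set.Icc 0 π).indicator sin v := by
  have hint (a b : ℝ) :
      IntervalIntegrable (fun x => sin x * relu (v - x)) MeasureTheory.volume a b :=
    (by fun_prop : Continuous fun x => sin x * relu (v - x)).intervalIntegrable a b
  rcases lt_or_ge v 0 with hv0 | hv0
  · have hzero : Set.EqOn (fun x => sin x * relu (v - x)) 0 (Set.uIcc 0 π) := by
      intro x hx
      rw [Set.uIcc_of_le pi_pos.le] at hx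
      simp [relu_of_nonpos (by linarith [hx.1] : v - x ≤ 0)]
    rw [intervalIntegral.integral_congr hzero, relu_of_nonpos hv0.le,
      relu_of_nonpos (by linarith [pi_pos]), Set.indicator_of_notMem (by simp [hv0])]
    simp
  rcases le_or_gt v π with hvπ | hvπ
  · have hramp : Set.EqOn (fun x => sin x * relu (v - x)) (fun x => sin x * (v - x))
        (Set.uIcc 0 v) := by
      intro x hx
      rw [Set.uIcc_of_le hv0] at hx
      simp [relu_of_nonneg (by linarith [hx.2] : 0 ≤ v - x)]
    have hzero : Set.EqOn (fun x => sin x * relu (v - x)) 0 (Set.uIcc v π) := by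
      intro x hx
      rw [Set.uIcc_of_le hvπ] at hx
      simp [relu_of_nonpos (by linarith [hx.1] : v - x ≤ 0)]
    rw [← intervalIntegral.integral_add_adjacent_intervals (hint 0 v) (hint v π),
      intervalIntegral.integral_congr hramp, intervalIntegral.integral_congr hzero,
      integral_sin_mul_sub, relu_of_nonneg hv0, relu_of_nonpos (by linarith),
      Set.indicator_of_mem (Set.mem_Icc.2 ⟨hv0, hvπ⟩)]
    simp
  · have hramp : Set.EqOn (fun x => sin x * relu (v - x)) (fun x => sin x * (v - x))
        (Set.uIcc 0 π) := by
      intro x hx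
      rw [Set.uIcc_of_le pi_pos.le] at hx
      simp [relu_of_nonneg (by linarith [hx.2] : 0 ≤ v - x)]
    rw [intervalIntegral.integral_congr hramp, integral_sin_mul_sub, relu_of_nonneg hv0,
      relu_of_nonneg (by linarith), Set.indicator_of_notMem (by simp [hvπ.not_ge])]
    simp
    ring

lemma integral_sin_pi_mul_mul_relu_sub (v : ℝ) :
    ∫ S in (0 : ℝ)..1, sin (π * S) * relu (v - π * S) =
      π⁻¹ * (relu v + relu (v - π) - (Set.Icc 0 π).indicator sin v) := by
  rw [intervalIntegral.integral_comp_mul_left (fun x => sin x * relu (v - x)) pi_ne_zero,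
    mul_zero, mul_one, integral_sin_mul_relu_sub, smul_eq_mul]

lemma integral_sin_pi_mul_mul_relu_sub_one_sub (v : ℝ) :
    ∫ S in (0 : ℝ)..1, sin (π * S) * relu (v - π * (1 - S)) =
      ∫ S in (0 : ℝ)..1, sin (π * S) * relu (v - π * S) := by
  simpa [mul_sub, sin_pi_sub] using
    intervalIntegral.integral_comp_sub_left (fun S => sin (π * S) * relu (v - π * S)) 1
      (a := 0) (b := 1)

lemma R4_eq_inv_mul_R4_one {ω : ℝ} (hω : 0 < ω) (S t : ℝ) :
    R4 ω S t = ω⁻¹ * R4 1 S (ω * t) := by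
  have hscale (c : ℝ) : relu (t - c / ω) = ω⁻¹ * relu (ω * t - c) := by
    rw [← relu_mul_of_nonneg (inv_nonneg.2 hω.le)]
    congr 1
    field_simp
  have ht : relu t = ω⁻¹ * relu (ω * t) := by simpa using hscale 0
  simp only [R4, div_one, ht, hscale]
  ring

lemma integral_sin_pi_mul_mul_R4_one (v : ℝ) :
    ∫ S in (0 : ℝ)..1, sin (π * S) * R4 1 S v = 2 / π * (Set.Icc 0 π).indicator sin v := by
  have hint {f : ℝ → ℝ} (hf : Continuous f) : IntervalIntegrable f MeasureTheory.volume 0 1 :=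
    hf.intervalIntegrable 0 1
  have hsin : ∫ S in (0 : ℝ)..1, sin (π * S) = 2 / π := by
    rw [intervalIntegral.integral_comp_mul_left sin pi_ne_zero, integral_sin]
    simp only [mul_zero, mul_one, cos_zero, cos_pi, smul_eq_mul]
    ring
  have hpoint (S : ℝ) : sin (π * S) * R4 1 S v = (relu v + relu (v - π)) * sin (π * S)
      - sin (π * S) * relu (v - π * S) - sin (π * S) * relu (v - π * (1 - S)) := by
    simp only [R4, div_one]
    ring
  simp only [hpoint]
  rw [intervalIntegral.integral_sub (hint (by fun_prop)) (hint (by fun_prop)),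
    intervalIntegral.integral_sub (hint (by fun_prop)) (hint (by fun_prop)),
    intervalIntegral.integral_const_mul, hsin, integral_sin_pi_mul_mul_relu_sub_one_sub,
    integral_sin_pi_mul_mul_relu_sub]
  field_simp
  ring

lemma integral_R4 {ω : ℝ} (hω : 0 < ω) (t : ℝ) :
    ∫ S in (0 : ℝ)..1, π * ω / 2 * sin (π * S) * R4 ω S t =
      (Set.Icc 0 π).indicator sin (ω * t) := by
  have hpoint (S : ℝ) : π * ω / 2 * sin (π * S) * R4 ω S t =
      π / 2 * (sin (π * S) * R4 1 S (ω * t)) := by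
    rw [R4_eq_inv_mul_R4_one hω]
    field_simp
  simp only [hpoint]
  rw [intervalIntegral.integral_const_mul, integral_sin_pi_mul_mul_R4_one]
  field_simp

lemma indicator_Icc_sin_sub_indicator_Icc_sin_sub_pi (v : ℝ) :
    (Set.Icc 0 π).indicator sin v - (Set.Icc 0 π).indicator sin (v - π) =
      (Set.Icc 0 (2 * π)).indicator sin v := by
  simp only [Set.indicator_apply, Set.mem_Icc, sin_sub_pi]
  split_ifs <;> grind [sin_pi]

lemma integral_gammaSin {ω : ℝ} (hω : 0 < ω) (t : ℝ) :
    ∫ S in (0 : ℝ)..1, gammaSin ω S t = (Set.Icc 0 (2 * π)).indicator sin (ω * t) := by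
  have hint (u : ℝ) :
      IntervalIntegrable (fun S => π * ω / 2 * sin (π * S) * R4 ω S u) MeasureTheory.volume 0 1 :=
    Continuous.intervalIntegrable (by unfold R4; fun_prop) 0 1
  simp only [gammaSin, mul_sub]
  rw [intervalIntegral.integral_sub (hint t) (hint _), integral_R4 hω, integral_R4 hω,
    show ω * (t - π / ω) = ω * t - π by field_simp,
    indicator_Icc_sin_sub_indicator_Icc_sin_sub_pi]

/-- **Unbiasedness of the random ReLU estimator for sine.** With `S ~ Unif[0,1]`,
`𝔼_S[Γ^sin(t; S, ω)] = sin(ωt)` for `t ∈ [0, 2π/ω]`, and `𝔼_S[Γ^sin(t; S, ω)] = 0` for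
`t ∉ [0, 2π/ω]`. -/
theorem gammaSin_expectation (ω : ℝ) (hω : 0 < ω) :
    (∀ t ∈ Set.Icc (0 : ℝ) (2 * π / ω),
      ∫ S in (0 : ℝ)..1, gammaSin ω S t = Real.sin (ω * t)) ∧
    (∀ t : ℝ, t ∉ Set.Icc (0 : ℝ) (2 * π / ω) →
      ∫ S in (0 : ℝ)..1, gammaSin ω S t = 0) := by
  have hmem (t : ℝ) : ω * t ∈ Set.Icc 0 (2 * π) ↔ t ∈ Set.Icc (0 : ℝ) (2 * π / ω) := by
    simp only [Set.mem_Icc, le_div_iff₀ hω, mul_comm ω, mul_nonneg_iff_of_pos_right hω]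
  refine ⟨fun t ht => ?_, fun t ht => ?_⟩ <;> rw [integral_gammaSin hω]
  · exact Set.indicator_of_mem ((hmem t).2 ht) sin
  · exact Set.indicator_of_notMem (mt (hmem t).1 ht) sin
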